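/- arXiv:2111.05267 — 4 statements merged into one kernel-verified Lean document; each statement's English description precedes it below -/
import Mathlib

section
/- Let X be a K×K matrix with strictly positive entries such that rank(X) = K. Let loḡ(X) denote the matrix obtained by applying the natural logarithm entrywise. Then, for Lebesgue-almost every such X, rank(loḡ(X)) = K. Equivalently, the set of full-rank positive matrices X for which loḡ(X) has rank less than K has Lebesgue measure zero. -/
/-!
On positive matrices the entrywise logarithm is inverted by the entrywise exponential, so the
exceptional set lies in the image under `exp` of the singular matrices. These form the zero set of
the nonzero polynomial `det`, which is null by induction on the number of variables and Fubini:
off a null set of the remaining variables, a slice of a nonzero polynomial is a nonzero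
one-variable polynomial and has finitely many roots. A differentiable map sends null sets to
null sets.
-/

open MeasureTheory

theorem MeasureTheory.volume_measurePreserving_uncurry (ι κ α : Type*) [Fintype ι] [Fintype κ]
    [MeasureSpace α] [SigmaFinite (volume : Measure α)] :
    MeasurePreserving (MeasurableEquiv.curry ι κ α).symm volume volume := by
  refine ⟨(MeasurableEquiv.curry ι κ α).symm.measurable, (Measure.pi_eq fun s _ => ?_).symm⟩
  have hbox : (MeasurableEquiv.curry ι κ α).symm ⁻¹' Set.univ.pi s =
      Set.univ.pi fun i => Set.univ.pi fun j => s (i, j) := by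
    ext Y
    simp [Set.mem_pi, Prod.forall, MeasurableEquiv.coe_curry_symm]
  rw [MeasurableEquiv.map_apply, hbox, volume_pi_pi]
  simp_rw [volume_pi_pi]
  rw [Fintype.prod_prod_type]

namespace MvPolynomial

theorem measurableSet_setOf_eval_eq_zero {σ : Type*} [Countable σ] (p : MvPolynomial σ ℝ) :
    MeasurableSet {x : σ → ℝ | eval x p = 0} :=
  (isClosed_eq (continuous_eval p) continuous_const).measurableSet

theorem finite_setOf_eval_cons_eq_zero {R : Type*} [CommRing R] [IsDomain R] {n : ℕ}
    {p : MvPolynomial (Fin (n + 1)) R} {y : Fin n → R} {m : ℕ}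
    (hy : eval y ((finSuccEquiv R n p).coeff m) ≠ 0) :
    {t : R | eval (Fin.cons t y) p = 0}.Finite := by
  have hslice : (finSuccEquiv R n p).map (eval y) ≠ 0 := fun h =>
    hy (by simpa using congrArg (Polynomial.coeff · m) h)
  refine (Polynomial.finite_setOfPred_isRoot hslice).subset fun t ht => ?_
  simpa [eval_eq_eval_mv_eval'] using ht

theorem volume_setOf_eval_eq_zero_fin : ∀ {n : ℕ} {p : MvPolynomial (Fin n) ℝ}, p ≠ 0 →
    volume {x : Fin n → ℝ | eval x p = 0} = 0
  | 0, p, hp => by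
    rw [eq_C_of_isEmpty p] at hp ⊢
    simp_all
  | n + 1, p, hp => by
    obtain ⟨m, hm⟩ : ∃ m, (finSuccEquiv ℝ n p).coeff m ≠ 0 := by
      by_contra! h
      exact hp ((finSuccEquiv ℝ n).injective (by ext1 m; simp [h m]))
    let e := (MeasurableEquiv.piFinSuccAbove (fun _ : Fin (n + 1) => ℝ) 0).trans
      MeasurableEquiv.prodComm
    have he : MeasurePreserving e volume volume :=
      Measure.measurePreserving_swap.comp
        (measurePreserving_piFinSuccAbove (fun _ : Fin (n + 1) => volume) 0)
    rw [← he.symm.measure_preimage_equiv,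
      Measure.volume_eq_prod, Measure.measure_prod_null
        ((measurableSet_setOf_eval_eq_zero p).preimage e.symm.measurable)]
    filter_upwards [compl_mem_ae_iff.mpr (volume_setOf_eval_eq_zero_fin hm)] with y hy
    refine measure_mono_null (fun t ht => ?_) ((finite_setOf_eval_cons_eq_zero hy).measure_zero _)
    simpa [e, MeasurableEquiv.prodComm, Fin.consEquiv] using ht

theorem volume_setOf_eval_eq_zero {σ : Type*} [Fintype σ] {p : MvPolynomial σ ℝ}
    (hp : p ≠ 0) : volume {x : σ → ℝ | eval x p = 0} = 0 := by
  let f := (Fintype.equivFin σ).symm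
  rw [← (volume_measurePreserving_piCongrLeft (fun _ => ℝ) f).measure_preimage_equiv]
  have hpre : MeasurableEquiv.piCongrLeft (fun _ => ℝ) f ⁻¹' {x | eval x p = 0} =
      {y | eval y (rename f.symm p) = 0} := by
    ext y
    have hy : MeasurableEquiv.piCongrLeft (fun _ => ℝ) f y = y ∘ f.symm := by
      funext i
      simp [MeasurableEquiv.coe_piCongrLeft, Equiv.piCongrLeft_apply_eq_cast]
    simp only [Set.mem_preimage, Set.mem_ofPred_eq, eval_rename, hy]
  rw [hpre]
  exact volume_setOf_eval_eq_zero_fin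
    ((map_ne_zero_iff _ (rename_injective _ f.symm.injective)).mpr hp)

end MvPolynomial

theorem Matrix.volume_setOf_det_eq_zero (n : Type*) [Fintype n] [DecidableEq n] :
    volume {A : n → n → ℝ | (Matrix.of A).det = 0} = 0 := by
  rw [← (volume_measurePreserving_uncurry n n ℝ).symm.measure_preimage_equiv]
  convert MvPolynomial.volume_setOf_eval_eq_zero (Matrix.det_mvPolynomialX_ne_zero n ℝ) using 2
  ext s
  simp only [Set.mem_preimage, Set.mem_ofPred_eq, Matrix.eval_det_mvPolynomialX]
  exact Iff.rfl

/-- For Lebesgue-almost every positive full-rank `K × K` matrix `X`, the entrywise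
logarithm of `X` also has full rank: the exceptional set has measure zero. -/
theorem stmt0 (K : ℕ) :
    volume {X : Fin K → Fin K → ℝ |
      (∀ i j, 0 < X i j) ∧ (Matrix.of X).rank = K ∧
        (Matrix.of fun i j => Real.log (X i j)).rank < K} = 0 := by
  let expEntrywise : (Fin K → Fin K → ℝ) → (Fin K → Fin K → ℝ) := fun Y i j => Real.exp (Y i j)
  have hsub : {X : Fin K → Fin K → ℝ |
      (∀ i j, 0 < X i j) ∧ (Matrix.of X).rank = K ∧
        (Matrix.of fun i j => Real.log (X i j)).rank < K} ⊆
      expEntrywise '' {Y | (Matrix.of Y).det = 0} := by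
    rintro X ⟨hpos, -, hrank⟩
    refine ⟨fun i j => Real.log (X i j), ?_, funext₂ fun i j => Real.exp_log (hpos i j)⟩
    by_contra hdet
    exact hrank.ne (by simpa using Matrix.rank_of_det_ne_zero hdet)
  refine measure_mono_null hsub (addHaar_image_eq_zero_of_differentiableOn_of_addHaar_eq_zero
    volume ?_ (Matrix.volume_setOf_det_eq_zero _))
  fun_prop
end

section
/- Let ξ_e, e ∈ E, be independent Bernoulli random variables indexed by a finite set E with success probabilities π_e > 0. For a subset S ⊆ E define ξ_S := ∏_{e∈S} ξ_e. Let S_1,…,S_k be nonempty subsets of E, let n_e be the number of indices j with e ∈ S_j, let E₁ := {e ∈ ⋃_j S_j : n_e = 1} and E₂ := (⋃_j S_j) \ E₁. Then |E[∏_{j=1}^k (ξ_{S_j} − E ξ_{S_j})]| ≤ (∏_{e∈E₁} π_e)·(∏_{e∈E₂} π_e(1+π_e)). -/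
/-!
Write `S j = A j ∪ B j` with `A j := S j ∩ E₁` and `B j := S j ∩ E₂`. The `ξ_e` are idempotent,
so expanding `∏ j (ξ_{S j} - π_{S j})` over the set of indices where `ξ_{S j}` is chosen turns the
expectation into an explicit polynomial in the `π_e`. Since every `e ∈ E₁` lies in a single `S j`,
the factors `π_{A j}` come out of every term of that polynomial, which gives
`E ∏ j (ξ_{S j} - π_{S j}) = π_{E₁} · E ∏ j (ξ_{B j} - π_{B j})`.
For the second factor, `|ξ_B - π_B| ≤ ∏_{e ∈ B} max ξ_e π_e`, each `e ∈ E₂` lies in at least two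
`B j`, and `max ξ_e π_e ^ n ≤ ξ_e + π_e ^ 2` for `n ≥ 2`; by independence the expectation of
`∏_{e ∈ E₂} (ξ_e + π_e ^ 2)` is `∏_{e ∈ E₂} π_e (1 + π_e)`.
-/

open MeasureTheory ProbabilityTheory Finset Function

namespace Finset

variable {E ι M : Type*}

lemma prod_mul_prod_eq_prod_union_of_zero_or_one [DecidableEq E] [CommMonoidWithZero M]
    {x : E → M} (hx : ∀ e, x e = 0 ∨ x e = 1) (A B : Finset E) :
    (∏ e ∈ A, x e) * ∏ e ∈ B, x e = ∏ e ∈ A ∪ B, x e := by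
  by_cases h : ∀ e ∈ A ∪ B, x e = 1
  · rw [prod_eq_one h, prod_eq_one fun e he => h e (mem_union_left B he),
      prod_eq_one fun e he => h e (mem_union_right A he), one_mul]
  · push Not at h
    obtain ⟨e, he, hxe⟩ := h
    have hx0 : x e = 0 := (hx e).resolve_right hxe
    rw [prod_eq_zero he hx0]
    rcases mem_union.1 he with hA | hB
    · rw [prod_eq_zero hA hx0, zero_mul]
    · rw [prod_eq_zero hB hx0, mul_zero]

lemma prod_prod_eq_prod_biUnion_of_zero_or_one [DecidableEq E] [DecidableEq ι]
    [CommMonoidWithZero M] {x : E → M} (hx : ∀ e, x e = 0 ∨ x e = 1) (T : Finset ι)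
    (S : ι → Finset E) :
    ∏ j ∈ T, ∏ e ∈ S j, x e = ∏ e ∈ T.biUnion S, x e := by
  induction T using Finset.induction_on with
  | empty => simp
  | insert j T hj ih =>
    rw [prod_insert hj, ih, prod_mul_prod_eq_prod_union_of_zero_or_one hx, biUnion_insert]

lemma prod_prod_eq_prod_pow_card [DecidableEq E] [CommMonoid M] [Fintype ι] {R : ι → Finset E}
    {F : Finset E} (hRF : ∀ j, R j ⊆ F) (y : E → M) :
    ∏ j, ∏ e ∈ R j, y e = ∏ e ∈ F, y e ^ #{j | e ∈ R j} := by
  rw [prod_comm' (t' := F) (s' := fun e => {j | e ∈ R j})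
    (fun j e => by simpa using fun he => hRF j he)]
  simp_rw [prod_const]

lemma abs_prod_sub_prod_le_prod_max {x p : E → ℝ} (F : Finset E) (hx : ∀ e ∈ F, 0 ≤ x e)
    (hp : ∀ e ∈ F, 0 ≤ p e) :
    |∏ e ∈ F, x e - ∏ e ∈ F, p e| ≤ ∏ e ∈ F, max (x e) (p e) := by
  have hxM : ∏ e ∈ F, x e ≤ ∏ e ∈ F, max (x e) (p e) :=
    prod_le_prod hx fun e _ => le_max_left _ _
  have hpM : ∏ e ∈ F, p e ≤ ∏ e ∈ F, max (x e) (p e) :=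
    prod_le_prod hp fun e _ => le_max_right _ _
  rw [abs_sub_le_iff]
  constructor <;> linarith [prod_nonneg hx, prod_nonneg hp]

end Finset

lemma max_pow_le_add_sq {x p : ℝ} (hx : x = 0 ∨ x = 1) (hp₀ : 0 ≤ p) (hp₁ : p ≤ 1) {n : ℕ}
    (hn : 2 ≤ n) : max x p ^ n ≤ x + p ^ 2 := by
  rcases hx with rfl | rfl
  · rw [max_eq_right hp₀, zero_add]
    exact pow_le_pow_of_le_one hp₀ hp₁ hn
  · rw [max_eq_left hp₁, one_pow]
    nlinarith

lemma abs_prod_sub_prod_le_prod_add_sq {ι E : Type*} [Fintype ι] [DecidableEq E] {x p : E → ℝ}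
    (hx : ∀ e, x e = 0 ∨ x e = 1) (hp₀ : ∀ e, 0 ≤ p e) (hp₁ : ∀ e, p e ≤ 1)
    {R : ι → Finset E} {F : Finset E} (hRF : ∀ j, R j ⊆ F)
    (hmult : ∀ e ∈ F, 2 ≤ #{j | e ∈ R j}) :
    |∏ j, (∏ e ∈ R j, x e - ∏ e ∈ R j, p e)| ≤ ∏ e ∈ F, (x e + p e ^ 2) := by
  have hx₀ : ∀ e, 0 ≤ x e := fun e => by rcases hx e with h | h <;> simp [h]
  calc |∏ j, (∏ e ∈ R j, x e - ∏ e ∈ R j, p e)|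
      = ∏ j, |∏ e ∈ R j, x e - ∏ e ∈ R j, p e| := abs_prod _ _
    _ ≤ ∏ j, ∏ e ∈ R j, max (x e) (p e) :=
        prod_le_prod (fun _ _ => abs_nonneg _) fun j _ =>
          abs_prod_sub_prod_le_prod_max _ (fun e _ => hx₀ e) (fun e _ => hp₀ e)
    _ = ∏ e ∈ F, max (x e) (p e) ^ #{j | e ∈ R j} := prod_prod_eq_prod_pow_card hRF _
    _ ≤ ∏ e ∈ F, (x e + p e ^ 2) :=
        prod_le_prod (fun e _ => pow_nonneg (le_max_of_le_right (hp₀ e)) _) fun e he =>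
          max_pow_le_add_sq (hx e) (hp₀ e) (hp₁ e) (hmult e he)

section CenteredMoment

variable {ι E : Type*} [Fintype ι] [DecidableEq ι] [DecidableEq E] (π : E → ℝ)

/-- The expectation of `∏ j (ξ_{S j} - π_{S j})` for independent idempotent `ξ_e` of means
`π_e`: the term of `T` collects the choice of `ξ_{S j}` for `j ∈ T`, and
`∏_{j ∈ T} ξ_{S j} = ξ_{⋃_T S j}`. -/
def centeredMoment (S : ι → Finset E) : ℝ :=
  ∑ T ∈ univ.powerset, (∏ j ∈ univ \ T, -∏ e ∈ S j, π e) * ∏ e ∈ T.biUnion S, π e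

lemma centeredMoment_union {A B : ι → Finset E} (hA : Pairwise (Disjoint on A))
    (hAB : ∀ i j, Disjoint (A i) (B j)) :
    centeredMoment π (fun j => A j ∪ B j) =
      (∏ e ∈ univ.biUnion A, π e) * centeredMoment π B := by
  have hAdisj : ∀ T : Finset ι, Set.PairwiseDisjoint (↑T) A := fun T => hA.set_pairwise _
  have hABdisj : ∀ T : Finset ι, Disjoint (T.biUnion A) (T.biUnion B) := fun T =>
    (disjoint_biUnion_left _ _ _).2 fun i _ =>
      (disjoint_biUnion_right _ _ _).2 fun j _ => hAB i j
  unfold centeredMoment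
  rw [mul_sum]
  refine sum_congr rfl fun T _ => ?_
  have hneg : ∀ j, -∏ e ∈ A j ∪ B j, π e = (∏ e ∈ A j, π e) * -∏ e ∈ B j, π e := fun j => by
    rw [prod_union (hAB j j), mul_neg]
  simp_rw [hneg]
  rw [prod_mul_distrib, biUnion_union, prod_union (hABdisj T), prod_biUnion (hAdisj T),
    prod_biUnion (hAdisj univ), ← prod_sdiff (subset_univ T)]
  ring

lemma centeredMoment_eq_mul_centeredMoment_filter_card_ne_one (S : ι → Finset E) :
    centeredMoment π S =
      (∏ e ∈ (univ.biUnion S).filter (fun e => #{j | e ∈ S j} = 1), π e) *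
        centeredMoment π (fun j => (S j).filter (fun e => #{i | e ∈ S i} ≠ 1)) := by
  set A : ι → Finset E := fun j => (S j).filter (fun e => #{i | e ∈ S i} = 1)
  have hS : S = fun j => A j ∪ (S j).filter (fun e => #{i | e ∈ S i} ≠ 1) :=
    funext fun j => (filter_union_filter_not_eq _ _).symm
  have hA : Pairwise (Disjoint on A) := fun i j hij => by
    refine disjoint_left.2 fun e hi hj => hij ?_
    simp only [A, mem_filter] at hi hj
    exact card_le_one.1 hi.2.le i (by simpa using hi.1) j (by simpa using hj.1)
  have hAB : ∀ i j, Disjoint (A i) ((S j).filter (fun e => #{i | e ∈ S i} ≠ 1)) := fun i j =>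
    disjoint_left.2 fun e hi hj => (mem_filter.1 hj).2 (mem_filter.1 hi).2
  have hE₁ : univ.biUnion A = (univ.biUnion S).filter (fun e => #{j | e ∈ S j} = 1) := by
    ext e
    simp [A]
  conv_lhs => rw [hS]
  rw [centeredMoment_union π hA hAB, hE₁]

end CenteredMoment

section Bernoulli

variable {Ω E : Type*} [MeasurableSpace Ω] {μ : Measure Ω} {ξ : E → Ω → ℝ}

lemma integrable_finset_prod_of_abs_le [IsFiniteMeasure μ] {f : E → Ω → ℝ}
    (hf : ∀ e, Measurable (f e)) (F : Finset E) {C : ℝ} (hC : ∀ e ω, |f e ω| ≤ C) :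
    Integrable (fun ω => ∏ e ∈ F, f e ω) μ := by
  refine Integrable.of_bound (Finset.measurable_prod F fun e _ => hf e).aestronglyMeasurable
    (C ^ #F) (ae_of_all _ fun ω => ?_)
  rw [norm_prod, ← prod_const]
  exact prod_le_prod (fun e _ => norm_nonneg _) fun e _ => hC e ω

lemma ProbabilityTheory.iIndepFun.integral_finset_prod_comp [Fintype E] (hind : iIndepFun ξ μ)
    (hmeas : ∀ e, Measurable (ξ e)) {g : E → ℝ → ℝ} (hg : ∀ e, Measurable (g e))
    (F : Finset E) :
    ∫ ω, ∏ e ∈ F, g e (ξ e ω) ∂μ = ∏ e ∈ F, ∫ ω, g e (ξ e ω) ∂μ := by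
  classical
  have := hind.isProbabilityMeasure
  let f : E → ℝ → ℝ := fun e => if e ∈ F then g e else 1
  have hf : ∀ e, ∫ ω, f e (ξ e ω) ∂μ = if e ∈ F then ∫ ω, g e (ξ e ω) ∂μ else 1 := fun e => by
    by_cases he : e ∈ F <;> simp [f, he]
  have h := hind.integral_fun_prod_comp (f := f) (fun e => (hmeas e).aemeasurable) fun e => by
    by_cases he : e ∈ F
    · simpa [f, he] using (hg e).aestronglyMeasurable
    · simpa [f, he] using aestronglyMeasurable_one
  simp_rw [hf, prod_ite_mem, univ_inter] at h
  simpa [f, ite_apply] using h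

lemma integral_eq_toReal_measure_eq_one {f : Ω → ℝ} (hf : Measurable f)
    (h01 : ∀ ω, f ω = 0 ∨ f ω = 1) : ∫ ω, f ω ∂μ = (μ {ω | f ω = 1}).toReal := by
  have hs : MeasurableSet {ω | f ω = 1} := hf (measurableSet_singleton 1)
  rw [← measureReal_def, ← integral_indicator_one hs]
  refine integral_congr_ae (ae_of_all _ fun ω => ?_)
  rcases h01 ω with h | h <;> simp [h]

variable [Fintype E] {π : E → ℝ}

lemma integral_prod_eq_prod (hind : iIndepFun ξ μ) (hmeas : ∀ e, Measurable (ξ e))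
    (h01 : ∀ e ω, ξ e ω = 0 ∨ ξ e ω = 1) (hπ : ∀ e, (μ {ω | ξ e ω = 1}).toReal = π e)
    (F : Finset E) : ∫ ω, ∏ e ∈ F, ξ e ω ∂μ = ∏ e ∈ F, π e :=
  (hind.integral_finset_prod_comp hmeas (g := fun _ x => x) (fun _ => measurable_id) F).trans <|
    prod_congr rfl fun e _ => (integral_eq_toReal_measure_eq_one (hmeas e) (h01 e)).trans (hπ e)

lemma integral_prod_centered_eq_centeredMoment {ι : Type*} [Fintype ι] [DecidableEq ι]
    [DecidableEq E] (hind : iIndepFun ξ μ) (hmeas : ∀ e, Measurable (ξ e))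
    (h01 : ∀ e ω, ξ e ω = 0 ∨ ξ e ω = 1) (hπ : ∀ e, (μ {ω | ξ e ω = 1}).toReal = π e)
    (S : ι → Finset E) :
    ∫ ω, ∏ j, (∏ e ∈ S j, ξ e ω - ∏ e ∈ S j, π e) ∂μ = centeredMoment π S := by
  have := hind.isProbabilityMeasure
  have hexpand : ∀ ω, ∏ j, (∏ e ∈ S j, ξ e ω - ∏ e ∈ S j, π e) =
      ∑ T ∈ univ.powerset, (∏ j ∈ univ \ T, -∏ e ∈ S j, π e) * ∏ e ∈ T.biUnion S, ξ e ω := by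
    intro ω
    simp_rw [sub_eq_add_neg, prod_add]
    refine sum_congr rfl fun T _ => ?_
    rw [prod_prod_eq_prod_biUnion_of_zero_or_one (h01 · ω), mul_comm]
  have hbound : ∀ e ω, |ξ e ω| ≤ 1 := fun e ω => by rcases h01 e ω with h | h <;> simp [h]
  simp_rw [hexpand]
  rw [integral_finsetSum _ fun T _ =>
    (integrable_finset_prod_of_abs_le hmeas _ hbound).const_mul _]
  refine sum_congr rfl fun T _ => ?_
  rw [integral_const_mul, integral_prod_eq_prod hind hmeas h01 hπ]

lemma abs_integral_prod_centered_le {ι : Type*} [Fintype ι] [DecidableEq E]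
    (hind : iIndepFun ξ μ) (hmeas : ∀ e, Measurable (ξ e))
    (h01 : ∀ e ω, ξ e ω = 0 ∨ ξ e ω = 1) (hπ : ∀ e, (μ {ω | ξ e ω = 1}).toReal = π e)
    {R : ι → Finset E} {F : Finset E} (hRF : ∀ j, R j ⊆ F)
    (hmult : ∀ e ∈ F, 2 ≤ #{j | e ∈ R j}) :
    |∫ ω, ∏ j, (∏ e ∈ R j, ξ e ω - ∏ e ∈ R j, π e) ∂μ| ≤ ∏ e ∈ F, π e * (1 + π e) := by
  have := hind.isProbabilityMeasure
  have hπ₀ : ∀ e, 0 ≤ π e := fun e => hπ e ▸ ENNReal.toReal_nonneg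
  have hπ₁ : ∀ e, π e ≤ 1 := fun e => by
    rw [← hπ e, ← measureReal_def]
    exact measureReal_le_one
  have hbound : ∀ e ω, |ξ e ω + π e ^ 2| ≤ 2 := fun e ω => by
    rw [abs_le]
    rcases h01 e ω with h | h <;> rw [h] <;> constructor <;> nlinarith [hπ₀ e, hπ₁ e]
  have hmean : ∀ e, ∫ ω, ξ e ω + π e ^ 2 ∂μ = π e * (1 + π e) := fun e => by
    have hint : Integrable (ξ e) μ := Integrable.of_bound (hmeas e).aestronglyMeasurable 1
      (ae_of_all _ fun ω => by rcases h01 e ω with h | h <;> simp [h])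
    rw [integral_add hint (integrable_const _),
      integral_eq_toReal_measure_eq_one (hmeas e) (h01 e), hπ, integral_const]
    simp only [probReal_univ, one_smul]
    ring
  rw [← Real.norm_eq_abs]
  calc ‖∫ ω, ∏ j, (∏ e ∈ R j, ξ e ω - ∏ e ∈ R j, π e) ∂μ‖
      ≤ ∫ ω, ∏ e ∈ F, (ξ e ω + π e ^ 2) ∂μ :=
        norm_integral_le_of_norm_le
          (integrable_finset_prod_of_abs_le (fun e => (hmeas e).add_const _) F hbound)
          (ae_of_all _ fun ω => abs_prod_sub_prod_le_prod_add_sq (h01 · ω) hπ₀ hπ₁ hRF hmult)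
    _ = ∏ e ∈ F, ∫ ω, ξ e ω + π e ^ 2 ∂μ :=
        hind.integral_finset_prod_comp hmeas (g := fun e x => x + π e ^ 2)
          (fun _ => measurable_id.add_const _) F
    _ = ∏ e ∈ F, π e * (1 + π e) := prod_congr rfl fun e _ => hmean e

end Bernoulli

theorem stmt2_general {Ω : Type*} [MeasurableSpace Ω] (μ : Measure Ω)
    {E : Type*} [Fintype E] [DecidableEq E]
    (ξ : E → Ω → ℝ) (π : E → ℝ)
    (hind : iIndepFun ξ μ)
    (hmeas : ∀ e, Measurable (ξ e))
    (h01 : ∀ e ω, ξ e ω = 0 ∨ ξ e ω = 1)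
    (hπ : ∀ e, (μ {ω | ξ e ω = 1}).toReal = π e)
    (k : ℕ) (S : Fin k → Finset E) :
    |∫ ω, ∏ j, ((∏ e ∈ S j, ξ e ω) - ∫ ω', ∏ e ∈ S j, ξ e ω' ∂μ) ∂μ| ≤
      (∏ e ∈ (Finset.univ.biUnion S).filter
          (fun e => (Finset.univ.filter (fun j => e ∈ S j)).card = 1), π e) *
        ∏ e ∈ (Finset.univ.biUnion S).filter
          (fun e => (Finset.univ.filter (fun j => e ∈ S j)).card ≠ 1), π e * (1 + π e) := by
  have hRE₂ : ∀ j, (S j).filter (fun e => #{i | e ∈ S i} ≠ 1) ⊆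
      (univ.biUnion S).filter (fun e => #{i | e ∈ S i} ≠ 1) := fun j =>
    filter_subset_filter _ (subset_biUnion_of_mem S (mem_univ j))
  have hmult : ∀ e ∈ (univ.biUnion S).filter (fun e => #{i | e ∈ S i} ≠ 1),
      2 ≤ #{j | e ∈ (S j).filter (fun e => #{i | e ∈ S i} ≠ 1)} := fun e he => by
    obtain ⟨he, hne⟩ := mem_filter.1 he
    obtain ⟨j, -, hj⟩ := mem_biUnion.1 he
    have hpos : 0 < #{i | e ∈ S i} := card_pos.2 ⟨j, by simpa using hj⟩
    simp only [mem_filter, ne_eq, hne, not_false_eq_true, and_true]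
    omega
  have hπ₀ : ∀ e ∈ (univ.biUnion S).filter (fun e => #{j | e ∈ S j} = 1), 0 ≤ π e :=
    fun e _ => hπ e ▸ ENNReal.toReal_nonneg
  simp only [integral_prod_eq_prod hind hmeas h01 hπ]
  rw [integral_prod_centered_eq_centeredMoment hind hmeas h01 hπ,
    centeredMoment_eq_mul_centeredMoment_filter_card_ne_one,
    ← integral_prod_centered_eq_centeredMoment hind hmeas h01 hπ, abs_mul,
    abs_of_nonneg (prod_nonneg hπ₀)]
  exact mul_le_mul_of_nonneg_left (abs_integral_prod_centered_le hind hmeas h01 hπ hRE₂ hmult)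
    (prod_nonneg hπ₀)

/-- Bound on the absolute value of the expectation of a product of centered products of
independent Bernoulli variables: singleton-covered indices contribute `π_e`, repeated
indices contribute `π_e (1 + π_e)`. -/
theorem stmt2 {Ω : Type*} [MeasurableSpace Ω] (μ : Measure Ω) [IsProbabilityMeasure μ]
    {E : Type*} [Fintype E] [DecidableEq E]
    (ξ : E → Ω → ℝ) (π : E → ℝ)
    (hind : iIndepFun ξ μ)
    (hmeas : ∀ e, Measurable (ξ e))
    (h01 : ∀ e ω, ξ e ω = 0 ∨ ξ e ω = 1)
    (hπpos : ∀ e, 0 < π e)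
    (hπ : ∀ e, (μ {ω | ξ e ω = 1}).toReal = π e)
    (k : ℕ) (S : Fin k → Finset E) (hS : ∀ j, (S j).Nonempty) :
    |∫ ω, ∏ j, ((∏ e ∈ S j, ξ e ω) - ∫ ω', ∏ e ∈ S j, ξ e ω' ∂μ) ∂μ| ≤
      (∏ e ∈ (Finset.univ.biUnion S).filter
          (fun e => (Finset.univ.filter (fun j => e ∈ S j)).card = 1), π e) *
        ∏ e ∈ (Finset.univ.biUnion S).filter
          (fun e => (Finset.univ.filter (fun j => e ∈ S j)).card ≠ 1), π e * (1 + π e) :=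
  stmt2_general μ ξ π hind hmeas h01 hπ k S
end

section
/- Let C ∈ ℝ₊^{n×n} with all row sums |C_{i⋆}|, column sums |C_{⋆j}|, and total sum |C| positive, and let b > 0. Define the single-variable function ℓ(x) = C_{ij} log σ(x) + b (|C_{i⋆}||C_{⋆j}|/|C|) log σ(−x), where σ(x) = 1/(1+e^{−x}) is the sigmoid. If C_{ij} > 0, then ℓ is maximized at the unique point x* = log(C_{ij}|C|/(|C_{i⋆}||C_{⋆j}|)) − log b. -/
/-!
Write `a = C_ij` and `c = b |C_{i⋆}||C_{⋆j}| / |C|`. Since `σ(-x) = 1 - σ(x)`, the objective is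
`a log p + c log (1 - p)` at `p = σ(x)`, and by Gibbs' inequality (i.e. `log u ≤ u - 1`, strict
for `u ≠ 1`) this is uniquely maximized at `p = a / (a + c)`, which is `σ(log (a / c))`.
The claim follows because `σ` is injective and `x*` is exactly `log (a / c)`.
-/

open Real

lemma mul_log_add_mul_log_one_sub_lt {a c p : ℝ} (ha : 0 < a) (hc : 0 < c)
    (hp0 : 0 < p) (hp1 : p < 1) (hne : p ≠ a / (a + c)) :
    a * log p + c * log (1 - p) < a * log (a / (a + c)) + c * log (c / (a + c)) := by
  have hac : 0 < a + c := by linarith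
  have hq : 0 < 1 - p := by linarith
  have hu : p * (a + c) / a ≠ 1 := by
    intro h
    apply hne
    field_simp at h ⊢
    linarith
  have hlog_p : log (p * (a + c) / a) < p * (a + c) / a - 1 :=
    log_lt_sub_one_of_pos (by positivity) hu
  have hlog_q : log ((1 - p) * (a + c) / c) ≤ (1 - p) * (a + c) / c - 1 :=
    log_le_sub_one_of_pos (by positivity)
  rw [log_div (by positivity) ha.ne', log_mul hp0.ne' hac.ne'] at hlog_p
  rw [log_div (by positivity) hc.ne', log_mul hq.ne' hac.ne'] at hlog_q
  rw [log_div ha.ne' hac.ne', log_div hc.ne' hac.ne']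
  have hsum : a * (p * (a + c) / a - 1) + c * ((1 - p) * (a + c) / c - 1) = 0 := by
    field_simp
    ring
  nlinarith [mul_lt_mul_of_pos_left hlog_p ha, mul_le_mul_of_nonneg_left hlog_q hc.le]

lemma Real.sigmoid_log_div {a c : ℝ} (ha : 0 < a) (hc : 0 < c) :
    sigmoid (log (a / c)) = a / (a + c) := by
  rw [sigmoid_def, exp_neg, exp_log (div_pos ha hc)]
  field_simp

theorem mul_log_sigmoid_add_mul_log_sigmoid_neg_lt {a c x : ℝ} (ha : 0 < a) (hc : 0 < c)
    (hx : x ≠ log (a / c)) :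
    a * log (sigmoid x) + c * log (sigmoid (-x)) <
      a * log (sigmoid (log (a / c))) + c * log (sigmoid (-log (a / c))) := by
  have hne : sigmoid x ≠ a / (a + c) := by
    rw [← sigmoid_log_div ha hc]
    exact sigmoid_injective.ne hx
  have hc' : c / (a + c) = 1 - a / (a + c) := by
    field_simp
    ring
  rw [sigmoid_neg, sigmoid_neg, sigmoid_log_div ha hc, ← hc']
  exact mul_log_add_mul_log_one_sub_lt ha hc (sigmoid_pos x) (sigmoid_lt_one x) hne

theorem stmt4_general (n : ℕ) (C : Matrix (Fin n) (Fin n) ℝ) (b : ℝ) (hb : 0 < b)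
    (i j : Fin n)
    (hrow : 0 < ∑ j', C i j') (hcol : 0 < ∑ i', C i' j)
    (htot : 0 < ∑ i', ∑ j', C i' j')
    (hij : 0 < C i j) :
    ∀ x : ℝ,
      x ≠ Real.log (C i j * (∑ i', ∑ j', C i' j') / ((∑ j', C i j') * (∑ i', C i' j)))
            - Real.log b →
      C i j * Real.log (1 / (1 + Real.exp (-x))) +
          b * ((∑ j', C i j') * (∑ i', C i' j) / (∑ i', ∑ j', C i' j')) *
            Real.log (1 / (1 + Real.exp (-(-x)))) <
        C i j * Real.log (1 / (1 + Real.exp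
              (-(Real.log (C i j * (∑ i', ∑ j', C i' j') /
                  ((∑ j', C i j') * (∑ i', C i' j))) - Real.log b)))) +
          b * ((∑ j', C i j') * (∑ i', C i' j) / (∑ i', ∑ j', C i' j')) *
            Real.log (1 / (1 + Real.exp
              (-(-(Real.log (C i j * (∑ i', ∑ j', C i' j') /
                  ((∑ j', C i j') * (∑ i', C i' j))) - Real.log b))))) := by
  intro x hx
  have hc : 0 < b * ((∑ j', C i j') * (∑ i', C i' j) / (∑ i', ∑ j', C i' j')) := by positivity
  have hx_star : log (C i j * (∑ i', ∑ j', C i' j') / ((∑ j', C i j') * (∑ i', C i' j)))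
      - log b = log (C i j / (b * ((∑ j', C i j') * (∑ i', C i' j) / (∑ i', ∑ j', C i' j')))) := by
    rw [← log_div (by positivity) hb.ne']
    congr 1
    field_simp
  simp only [one_div, ← sigmoid_def, hx_star] at hx ⊢
  exact mul_log_sigmoid_add_mul_log_sigmoid_neg_lt hij hc hx

/-- The SGNS single-entry objective `ℓ(x) = C_ij log σ(x) + b (|C_{i⋆}||C_{⋆j}|/|C|) log σ(-x)`
is uniquely maximized at `x* = log (C_ij |C| / (|C_{i⋆}| |C_{⋆j}|)) - log b`. -/
theorem stmt4 (n : ℕ) (C : Matrix (Fin n) (Fin n) ℝ) (b : ℝ) (hb : 0 < b)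
    (hC : ∀ i j, 0 ≤ C i j) (i j : Fin n)
    (hrow : 0 < ∑ j', C i j') (hcol : 0 < ∑ i', C i' j)
    (htot : 0 < ∑ i', ∑ j', C i' j')
    (hij : 0 < C i j) :
    ∀ x : ℝ,
      x ≠ Real.log (C i j * (∑ i', ∑ j', C i' j') / ((∑ j', C i j') * (∑ i', C i' j)))
            - Real.log b →
      C i j * Real.log (1 / (1 + Real.exp (-x))) +
          b * ((∑ j', C i j') * (∑ i', C i' j) / (∑ i', ∑ j', C i' j')) *
            Real.log (1 / (1 + Real.exp (-(-x)))) <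
        C i j * Real.log (1 / (1 + Real.exp
              (-(Real.log (C i j * (∑ i', ∑ j', C i' j') /
                  ((∑ j', C i j') * (∑ i', C i' j))) - Real.log b)))) +
          b * ((∑ j', C i j') * (∑ i', C i' j) / (∑ i', ∑ j', C i' j')) *
            Real.log (1 / (1 + Real.exp
              (-(-(Real.log (C i j * (∑ i', ∑ j', C i' j') /
                  ((∑ j', C i j') * (∑ i', C i' j))) - Real.log b))))) :=
  stmt4_general n C b hb i j hrow hcol htot hij
end

section
/- Let V, V₀ ∈ ℝ^{n×K} each have K distinct rows partitioning [n] into clusters, and suppose V takes value v_r on cluster r with min_{r≠s}‖v_r − v_s‖ ≥ 3δ, while ‖V_{i⋆} − (V₀)_{i⋆}‖ < δ for all i outside a set S. If V₀ also takes constant values on each true cluster with pairwise distances ≥ 3δ between distinct clusters, then every node i ∉ S is assigned by V to the same cluster-value as every other node outside S in its true community; i.e., the clustering induced by V agrees with the true clustering on [n]\S up to a permutation of labels. -/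
/-! Two points within `δ` of one point are within `2δ` of each other, so among centers that are
pairwise at least `2δ` apart there is at most one such point. For `i, j ∉ S`, if `V i = V j`
then this common point is `δ`-close to both `V₀ i` and `V₀ j`, which forces `g i = g j`;
the converse is the same argument with the roles of `V` and `V₀` exchanged. -/

section Separated

variable {ι κ α X : Type*} [PseudoMetricSpace X] {δ : ℝ}

theorem eq_of_dist_lt_of_separated {c : ι → X}
    (hsep : ∀ r s, r ≠ s → 2 * δ ≤ dist (c r) (c s)) {x : X} {r s : ι}
    (hr : dist x (c r) < δ) (hs : dist x (c s) < δ) : r = s := by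
  by_contra hrs
  linarith [hsep r s hrs, dist_triangle_left (c r) (c s) x]

theorem label_eq_of_label_eq_of_dist_lt {v : κ → X} {u : ι → X} {h : α → κ} {g : α → ι}
    (hsep : ∀ r s, r ≠ s → 2 * δ ≤ dist (u r) (u s)) {i j : α}
    (hi : dist (v (h i)) (u (g i)) < δ) (hj : dist (v (h j)) (u (g j)) < δ)
    (hij : h i = h j) : g i = g j :=
  eq_of_dist_lt_of_separated hsep hi (hij ▸ hj)

end Separated

/-- If the estimated row values `V i = v (h i)` have centers separated by at least `3δ`,
the true row values `V₀ i = u (g i)` have centers separated by at least `3δ`, and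
`‖V_{i⋆} − (V₀)_{i⋆}‖ < δ` outside a set `S`, then on the complement of `S` the clustering
induced by `V` agrees with the true clustering (up to a permutation of labels):
for `i, j ∉ S`, `h i = h j ↔ g i = g j`. -/
theorem stmt8 (n K : ℕ) (δ : ℝ) (hδ : 0 < δ)
    (V V₀ : Fin n → EuclideanSpace ℝ (Fin K))
    (h g : Fin n → Fin K)
    (v u : Fin K → EuclideanSpace ℝ (Fin K))
    (hV : ∀ i, V i = v (h i)) (hV₀ : ∀ i, V₀ i = u (g i))
    (hsepv : ∀ r s, r ≠ s → 3 * δ ≤ ‖v r - v s‖)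
    (hsepu : ∀ r s, r ≠ s → 3 * δ ≤ ‖u r - u s‖)
    (S : Set (Fin n))
    (hclose : ∀ i, i ∉ S → ‖V i - V₀ i‖ < δ) :
    ∀ i j, i ∉ S → j ∉ S → (h i = h j ↔ g i = g j) := by
  intro i j hi hj
  have sep_of_norm_sep (w : Fin K → EuclideanSpace ℝ (Fin K))
      (hw : ∀ r s, r ≠ s → 3 * δ ≤ ‖w r - w s‖) (r s : Fin K) (hrs : r ≠ s) :
      2 * δ ≤ dist (w r) (w s) := by
    rw [dist_eq_norm]; linarith [hw r s hrs]
  have close (k : Fin n) (hk : k ∉ S) : dist (v (h k)) (u (g k)) < δ := by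
    rw [dist_eq_norm, ← hV, ← hV₀]; exact hclose k hk
  have close' (k : Fin n) (hk : k ∉ S) : dist (u (g k)) (v (h k)) < δ := by
    rw [dist_comm]; exact close k hk
  exact ⟨label_eq_of_label_eq_of_dist_lt (sep_of_norm_sep u hsepu) (close i hi) (close j hj),
    label_eq_of_label_eq_of_dist_lt (sep_of_norm_sep v hsepv) (close' i hi) (close' j hj)⟩
end
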